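/- (Theorem 2.1.) Let N be a natural number and let q_k ∈ ℂ[X] be given for each integer k with |k| ≤ N, and let Q = ∑_{k=0}^{N} S^k ∘ q_k(D) + ∑_{k=1}^{N} S'^k ∘ q_{−k}(D). Then Q commutes with the Szegő projector Π if and only if Q lies in the ℂ-subalgebra of End(V) generated by the three operators D, D∘S and S'∘D (i.e. Q ∈ Algebra.adjoin ℂ {D, D∘S, S'∘D}). In other words, the algebra of differential operators on S¹ commuting with Π is generated by (1/i)d/dθ, (1/i)(d/dθ)e^{iθ} and e^{−iθ}(1/i)d/dθ. -/

import Mathlib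

open Polynomial

local notation "V" => (ℤ →₀ ℂ)

/-- The operator `(1/i) d/dθ`: `D δ_m = m • δ_m`. -/
noncomputable def D : Module.End ℂ V :=
  Finsupp.lsum ℂ fun m => (m : ℂ) • Finsupp.lsingle m

/-- Multiplication by `e^{iθ}`, the up-shift: `S δ_m = δ_{m+1}`. -/
noncomputable def S : Module.End ℂ V :=
  Finsupp.lsum ℂ fun m => Finsupp.lsingle (m + 1)

/-- Multiplication by `e^{-iθ}`, the down-shift: `S' δ_m = δ_{m-1}`. -/
noncomputable def S' : Module.End ℂ V :=
  Finsupp.lsum ℂ fun m => Finsupp.lsingle (m - 1)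

/-- The Szegő projector: `Π δ_m = δ_m` for `m ≥ 0`, `Π δ_m = 0` for `m < 0`. -/
noncomputable def Szego : Module.End ℂ V :=
  Finsupp.lsum ℂ fun m => if 0 ≤ m then Finsupp.lsingle m else 0

/-!
On the basis, `Q δ_m = ∑_k q_k(m) δ_{m+k}`, and an operator commutes with `Π` exactly when it
never sends a mode `m` across `0`. For `Q` this says that `q_k` vanishes at `-1, …, -k` and
`q_{-k}` at `0, …, k-1`. These are precisely the roots of the polynomials `p` with
`(D S)^k = S^k p(D)`, resp. `(S' D)^k = S'^k p(D)`, so every term of `Q` factors as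
`(D S)^k r(D)` or `(S' D)^k r(D)`. Conversely, `D`, `D S` and `S' D` commute with `Π`.
-/

section Single

variable (m : ℤ) (a : ℂ)

lemma D_single : D (Finsupp.single m a) = (m : ℂ) • Finsupp.single m a := by
  simp [D]

lemma S_single : S (Finsupp.single m a) = Finsupp.single (m + 1) a := by
  simp [S]

lemma S'_single : S' (Finsupp.single m a) = Finsupp.single (m - 1) a := by
  simp [S']

lemma Szego_single : Szego (Finsupp.single m a) = if 0 ≤ m then Finsupp.single m a else 0 := by
  simp only [Szego, Finsupp.lsum_single]
  split <;> simp

lemma S_pow_single (n : ℕ) : (S ^ n) (Finsupp.single m a) = Finsupp.single (m + n) a := by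
  induction n with
  | zero => simp
  | succ n ih => rw [pow_succ', Module.End.mul_apply, ih, S_single]; push_cast; ring_nf

lemma S'_pow_single (n : ℕ) : (S' ^ n) (Finsupp.single m a) = Finsupp.single (m - n) a := by
  induction n with
  | zero => simp
  | succ n ih => rw [pow_succ', Module.End.mul_apply, ih, S'_single]; push_cast; ring_nf

lemma D_pow_single (n : ℕ) : (D ^ n) (Finsupp.single m a) = ((m : ℂ) ^ n) • Finsupp.single m a := by
  induction n with
  | zero => simp
  | succ n ih => rw [pow_succ', Module.End.mul_apply, ih, map_smul, D_single, smul_smul, pow_succ]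

lemma aeval_D_single (p : ℂ[X]) :
    aeval D p (Finsupp.single m a) = p.eval (m : ℂ) • Finsupp.single m a := by
  induction p using Polynomial.induction_on' with
  | add p r hp hr => simp only [map_add, LinearMap.add_apply, hp, hr, eval_add, add_smul]
  | monomial n c =>
    rw [aeval_monomial, Module.End.mul_apply, D_pow_single, map_smul,
      Module.algebraMap_end_apply, smul_smul, eval_monomial, mul_comm]

end Single

lemma Szego_apply (f : V) (t : ℤ) : Szego f t = if 0 ≤ t then f t else 0 := by
  induction f using Finsupp.induction_linear with
  | zero => simp
  | add f g hf hg => rw [map_add, Finsupp.add_apply, hf, hg]; split <;> simp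
  | single m a =>
    rw [Szego_single]
    split_ifs with hm ht ht <;> simp [Finsupp.single_apply] <;> omega

lemma commute_Szego_iff (T : Module.End ℂ V) :
    Commute T Szego ↔ ∀ m t : ℤ, (0 ≤ m ↔ t < 0) → T (Finsupp.single m 1) t = 0 := by
  have hpt : ∀ m t : ℤ, (T * Szego) (Finsupp.single m 1) t = (Szego * T) (Finsupp.single m 1) t
      ↔ ((0 ≤ m ↔ t < 0) → T (Finsupp.single m 1) t = 0) := by
    intro m t
    rw [Module.End.mul_apply, Module.End.mul_apply, Szego_single, Szego_apply]
    by_cases hm : 0 ≤ m <;> by_cases ht : 0 ≤ t <;> simp only [hm, ht, if_true, if_false] <;> grind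
  refine ⟨fun h m t => (hpt m t).1 congr($(h.eq) (Finsupp.single m 1) t), fun h => ?_⟩
  refine Finsupp.lhom_ext' fun m => LinearMap.ext_ring (Finsupp.ext fun t => ?_)
  exact (hpt m t).2 (h m t)

lemma commute_D_Szego : Commute D Szego :=
  (commute_Szego_iff D).2 fun m t h => by
    rw [D_single, Finsupp.smul_apply, Finsupp.single_apply, if_neg (by omega), smul_zero]

lemma commute_D_mul_S_Szego : Commute (D * S) Szego :=
  (commute_Szego_iff _).2 fun m t h => by
    rw [Module.End.mul_apply, S_single, D_single, Finsupp.smul_apply, Finsupp.single_apply]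
    split_ifs with ht
    · obtain rfl : m = -1 := by omega
      simp
    · exact smul_zero _

lemma commute_S'_mul_D_Szego : Commute (S' * D) Szego :=
  (commute_Szego_iff _).2 fun m t h => by
    rw [Module.End.mul_apply, D_single, map_smul, S'_single, Finsupp.smul_apply,
      Finsupp.single_apply]
    split_ifs with ht
    · obtain rfl : m = 0 := by omega
      simp
    · exact smul_zero _

local notation "𝒜" => Algebra.adjoin ℂ ({D, D * S, S' * D} : Set (Module.End ℂ V))

lemma commute_Szego_of_mem_adjoin {T : Module.End ℂ V} (hT : T ∈ 𝒜) : Commute T Szego :=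
  (Algebra.commute_of_mem_adjoin_of_forall_mem_commute hT <| by
    rintro _ (rfl | rfl | rfl)
    exacts [commute_D_Szego.symm, commute_D_mul_S_Szego.symm, commute_S'_mul_D_Szego.symm]).symm

lemma D_mul_S_pow (n : ℕ) :
    (D * S) ^ n = S ^ n * aeval D (∏ j ∈ Finset.range n, (X - C (-(j : ℂ) - 1))) := by
  induction n with
  | zero => simp
  | succ n ih =>
    refine Finsupp.lhom_ext fun m a => ?_
    simp only [pow_succ, ih, Module.End.mul_apply, S_single, D_single, map_smul, aeval_D_single,
      S_pow_single, smul_smul, eval_prod, eval_sub, eval_X, eval_C]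
    rw [Finset.prod_range_succ']
    push_cast
    ring_nf

lemma S'_mul_D_pow (n : ℕ) :
    (S' * D) ^ n = S' ^ n * aeval D (∏ j ∈ Finset.range n, (X - C (j : ℂ))) := by
  induction n with
  | zero => simp
  | succ n ih =>
    refine Finsupp.lhom_ext fun m a => ?_
    simp only [pow_succ, ih, Module.End.mul_apply, S'_single, D_single, map_smul, aeval_D_single,
      S'_pow_single, smul_smul, eval_prod, eval_sub, eval_X, eval_C]
    rw [Finset.prod_range_succ']
    push_cast
    ring_nf

lemma prod_X_sub_C_dvd_of_eval_eq_zero {K ι : Type*} [Field K] {r : ι → K}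
    (hr : Function.Injective r) (s : Finset ι) {p : K[X]} (hp : ∀ i ∈ s, p.eval (r i) = 0) :
    ∏ i ∈ s, (X - C (r i)) ∣ p :=
  Finset.prod_dvd_of_coprime ((pairwise_coprime_X_sub_C hr).set_pairwise _)
    fun i hi => dvd_iff_isRoot.2 (hp i hi)

lemma aeval_D_mem_adjoin (p : ℂ[X]) : aeval D p ∈ 𝒜 :=
  Algebra.adjoin_mono (by simp) (aeval_mem_adjoin_singleton ℂ D)

lemma S_pow_mul_aeval_D_mem_adjoin {n : ℕ} {p : ℂ[X]}
    (hp : ∀ j < n, p.eval (-(j : ℂ) - 1) = 0) : S ^ n * aeval D p ∈ 𝒜 := by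
  obtain ⟨r, rfl⟩ := prod_X_sub_C_dvd_of_eval_eq_zero (r := fun j : ℕ => -(j : ℂ) - 1)
    (fun i j h => by simpa using h) (Finset.range n) (by simpa using hp)
  rw [map_mul, ← mul_assoc, ← D_mul_S_pow]
  exact mul_mem (pow_mem (Algebra.subset_adjoin (by simp)) n) (aeval_D_mem_adjoin r)

lemma S'_pow_mul_aeval_D_mem_adjoin {n : ℕ} {p : ℂ[X]}
    (hp : ∀ j < n, p.eval (j : ℂ) = 0) : S' ^ n * aeval D p ∈ 𝒜 := by
  obtain ⟨r, rfl⟩ := prod_X_sub_C_dvd_of_eval_eq_zero (r := fun j : ℕ => (j : ℂ))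
    Nat.cast_injective (Finset.range n) (by simpa using hp)
  rw [map_mul, ← mul_assoc, ← S'_mul_D_pow]
  exact mul_mem (pow_mem (Algebra.subset_adjoin (by simp)) n) (aeval_D_mem_adjoin r)

noncomputable def diffOp (N : ℕ) (q : ℤ → ℂ[X]) : Module.End ℂ V :=
  ∑ k ∈ Finset.range (N + 1), S ^ k * aeval D (q k) +
    ∑ k ∈ Finset.Icc 1 N, S' ^ k * aeval D (q (-k))

section diffOp

variable {N : ℕ} (q : ℤ → ℂ[X]) (m : ℤ)

lemma diffOp_single : diffOp N q (Finsupp.single m 1) =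
    ∑ k ∈ Finset.range (N + 1), Finsupp.single (m + k) ((q k).eval (m : ℂ)) +
      ∑ k ∈ Finset.Icc 1 N, Finsupp.single (m - k) ((q (-k)).eval (m : ℂ)) := by
  simp [diffOp, aeval_D_single, S_pow_single, S'_pow_single]

lemma diffOp_single_apply_add {n : ℕ} (hn : n ≤ N) :
    diffOp N q (Finsupp.single m 1) (m + n) = (q n).eval (m : ℂ) := by
  simp only [diffOp_single, Finsupp.add_apply, Finsupp.finsetSum_apply, Finsupp.single_apply,
    add_right_inj, Nat.cast_inj, Finset.sum_ite_eq', Finset.mem_range, Order.lt_add_one_iff, hn,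
    if_true, add_eq_left]
  exact Finset.sum_eq_zero fun k hk => if_neg (by simp at hk; omega)

lemma diffOp_single_apply_sub {n : ℕ} (hn1 : 1 ≤ n) (hnN : n ≤ N) :
    diffOp N q (Finsupp.single m 1) (m - n) = (q (-n)).eval (m : ℂ) := by
  simp only [diffOp_single, Finsupp.add_apply, Finsupp.finsetSum_apply, Finsupp.single_apply,
    sub_right_inj, Nat.cast_inj, Finset.sum_ite_eq', Finset.mem_Icc, hn1, hnN, and_self, if_true,
    add_eq_right]
  exact Finset.sum_eq_zero fun k hk => if_neg (by simp at hk; omega)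

end diffOp

lemma diffOp_mem_adjoin_of_commute {N : ℕ} {q : ℤ → ℂ[X]} (h : Commute (diffOp N q) Szego) :
    diffOp N q ∈ 𝒜 := by
  rw [commute_Szego_iff] at h
  refine add_mem (Subalgebra.sum_mem _ fun n hn => S_pow_mul_aeval_D_mem_adjoin fun j hj => ?_)
    (Subalgebra.sum_mem _ fun n hn => S'_pow_mul_aeval_D_mem_adjoin fun j hj => ?_)
  · rw [Finset.mem_range] at hn
    have := h (-j - 1) (-j - 1 + n) (by omega)
    rw [diffOp_single_apply_add q _ (by omega)] at this
    simpa using this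
  · rw [Finset.mem_Icc] at hn
    have := h j (j - n) (by omega)
    rw [diffOp_single_apply_sub q _ hn.1 hn.2] at this
    simpa using this

/-- Theorem 2.1: a differential operator
`Q = ∑_{k=0}^N S^k ∘ q_k(D) + ∑_{k=1}^N S'^k ∘ q_{-k}(D)` on `S¹` commutes with the
Szegő projector `Π` iff it lies in the algebra generated by `(1/i)d/dθ`,
`(1/i)(d/dθ)e^{iθ}` and `e^{-iθ}(1/i)d/dθ`, i.e. by `D`, `D∘S` and `S'∘D`. -/
theorem statement3 (N : ℕ) (q : ℤ → ℂ[X]) (Q : Module.End ℂ V)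
    (hQ : Q = ∑ k ∈ Finset.range (N + 1), S ^ k * Polynomial.aeval D (q (k : ℤ))
        + ∑ k ∈ Finset.Icc 1 N, S' ^ k * Polynomial.aeval D (q (-(k : ℤ)))) :
    Commute Q Szego ↔ Q ∈ Algebra.adjoin ℂ ({D, D * S, S' * D} : Set (Module.End ℂ V)) := by
  obtain rfl : Q = diffOp N q := hQ
  exact ⟨diffOp_mem_adjoin_of_commute, commute_Szego_of_mem_adjoin⟩
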